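/- Let G be a finite bipartite graph with variable nodes V (|V| = N, every variable degree between z_min and z_max) and constraint nodes C that is a (γ, 1−ε) expander with ε ≤ 1/4, where γN is a positive integer, and equip each constraint node c with a set A_c of satisfying local assignments any two distinct elements of which differ in at least two coordinates. Let Q_0 satisfy every constraint, and let Q(0), Q(1), Q(2), … be a sequence of states such that consecutive states differ in exactly one variable node and the number of constraints unsatisfied by Q(t) is non-increasing in t. If Q(0) differs from Q_0 on fewer than (z_min/z_max)·(γN/2) variable nodes, then for every t, Q(t) differs from Q_0 on fewer than γN variable nodes. -/

import Mathlib

/-!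
Let `D(t)` be the set of variables on which `Q t` differs from `Q₀`. A constraint with exactly
one neighbour in `D(t)` sees a local assignment at Hamming distance one from a satisfying one,
so it is unsatisfied. When `|D(t)| ≤ γN`, expansion with `ε ≤ 1/4` yields at least
`|δ(D(t))|/2 ≥ z_min |D(t)|/2` such unique neighbours, whereas `Q 0` violates at most
`z_max |D(0)| < z_min γN/2` constraints. Since `|D(t)|` grows by at most one per step, it could
only exceed `γN` after equalling it, and at that time more constraints would be violated than
at time `0`.
-/

open Finset

open scoped Classical

section

variable {V C : Type*} [Fintype V] [Fintype C]

def SatisfiesCon (Adj : V → C → Prop) (A : ∀ c : C, Set ({v : V // Adj v c} → Bool))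
    (Q : V → Bool) (c : C) : Prop :=
  (fun v : {v : V // Adj v c} => Q v.1) ∈ A c

noncomputable def unsatCount (Adj : V → C → Prop)
    (A : ∀ c : C, Set ({v : V // Adj v c} → Bool)) (Q : V → Bool) : ℕ :=
  (Finset.univ.filter (fun c : C => ¬ SatisfiesCon Adj A Q c)).card

namespace BipartiteGraph

variable (Adj : V → C → Prop)

noncomputable def incidentEdges (S : Finset V) : Finset (V × C) :=
  univ.filter fun p => p.1 ∈ S ∧ Adj p.1 p.2

noncomputable def neighbors (S : Finset V) : Finset C :=
  univ.filter fun c => ∃ v ∈ S, Adj v c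

noncomputable def uniqueNeighbors (S : Finset V) : Finset C :=
  univ.filter fun c => #(S.filter (Adj · c)) = 1

lemma card_incidentEdges_eq_sum_degree (S : Finset V) :
    #(incidentEdges Adj S) = ∑ v ∈ S, #(univ.filter (Adj v)) := by
  rw [incidentEdges, card_filter, Fintype.sum_prod_type,
    ← sum_subset (subset_univ S) fun v _ hv => by simp [hv]]
  exact sum_congr rfl fun v hv => by simp [hv]

lemma card_incidentEdges_eq_sum_card_filter (S : Finset V) :
    #(incidentEdges Adj S) = ∑ c, #(S.filter (Adj · c)) := by
  rw [incidentEdges, card_filter, Fintype.sum_prod_type, sum_comm]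
  simp only [ite_and, sum_ite_mem, univ_inter, sum_boole, Nat.cast_id]

omit [Fintype V] in
lemma mem_neighbors_iff_card_pos (S : Finset V) (c : C) :
    c ∈ neighbors Adj S ↔ 0 < #(S.filter (Adj · c)) := by
  simp [neighbors, card_pos, Finset.Nonempty]

lemma mul_card_le_card_incidentEdges {z : ℕ} (hz : ∀ v, z ≤ #(univ.filter (Adj v)))
    (S : Finset V) : z * #S ≤ #(incidentEdges Adj S) := by
  rw [card_incidentEdges_eq_sum_degree, mul_comm, ← smul_eq_mul, ← sum_const]
  exact sum_le_sum fun v _ => hz v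

lemma card_incidentEdges_le_mul_card {z : ℕ} (hz : ∀ v, #(univ.filter (Adj v)) ≤ z)
    (S : Finset V) : #(incidentEdges Adj S) ≤ z * #S := by
  rw [card_incidentEdges_eq_sum_degree, mul_comm, ← smul_eq_mul, ← sum_const]
  exact sum_le_sum fun v _ => hz v

lemma card_neighbors_le_card_incidentEdges (S : Finset V) :
    #(neighbors Adj S) ≤ #(incidentEdges Adj S) :=
  calc #(neighbors Adj S) = ∑ _c ∈ neighbors Adj S, 1 := card_eq_sum_ones _
    _ ≤ ∑ c ∈ neighbors Adj S, #(S.filter (Adj · c)) :=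
      sum_le_sum fun c hc => (mem_neighbors_iff_card_pos Adj S c).1 hc
    _ ≤ ∑ c, #(S.filter (Adj · c)) := sum_le_sum_of_subset (subset_univ _)
    _ = #(incidentEdges Adj S) := (card_incidentEdges_eq_sum_card_filter Adj S).symm

/-- Every neighbour of `S` that is not unique receives at least two edges from `S`. -/
lemma two_mul_card_neighbors_le (S : Finset V) :
    2 * #(neighbors Adj S) ≤ #(incidentEdges Adj S) + #(uniqueNeighbors Adj S) := by
  rw [card_incidentEdges_eq_sum_card_filter, neighbors, uniqueNeighbors, card_filter,
    card_filter (fun c => #(S.filter (Adj · c)) = 1), mul_sum, ← sum_add_distrib]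
  refine sum_le_sum fun c _ => ?_
  have hpos : (∃ v ∈ S, Adj v c) ↔ 0 < #(S.filter (Adj · c)) := by
    simpa [neighbors] using mem_neighbors_iff_card_pos Adj S c
  simp only [hpos]
  split_ifs <;> omega

lemma card_incidentEdges_le_two_mul_card_uniqueNeighbors {ε : ℝ} (hε : ε ≤ 1 / 4)
    {S : Finset V} (hexp : (1 - ε) * #(incidentEdges Adj S) ≤ #(neighbors Adj S)) :
    #(incidentEdges Adj S) ≤ 2 * #(uniqueNeighbors Adj S) := by
  have hcount : (2 : ℝ) * #(neighbors Adj S) ≤ #(incidentEdges Adj S) + #(uniqueNeighbors Adj S) := by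
    exact_mod_cast two_mul_card_neighbors_le Adj S
  have hE : (0 : ℝ) ≤ #(incidentEdges Adj S) := Nat.cast_nonneg _
  have : (#(incidentEdges Adj S) : ℝ) ≤ 2 * #(uniqueNeighbors Adj S) := by
    nlinarith [mul_nonneg hE (by linarith : (0 : ℝ) ≤ 1 / 4 - ε)]
  exact_mod_cast this

end BipartiteGraph

open BipartiteGraph

def disagreeSet (Q Q₀ : V → Bool) : Finset V :=
  univ.filter fun v => Q v ≠ Q₀ v

omit [Fintype C] in
lemma card_disagreeSet (Q Q₀ : V → Bool) : #(disagreeSet Q Q₀) = hammingDist Q Q₀ := rfl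

variable {Adj : V → C → Prop} {A : ∀ c : C, Set ({v : V // Adj v c} → Bool)} {Q Q₀ : V → Bool}

omit [Fintype C] in
lemma hammingDist_restrict_eq_card (Q Q₀ : V → Bool) (c : C) :
    hammingDist (fun w : {v // Adj v c} => Q w) (fun w => Q₀ w)
      = #((disagreeSet Q Q₀).filter (Adj · c)) := by
  rw [← card_subtype]
  exact congrArg card (by ext w; simp [disagreeSet])

lemma satisfiesCon_of_notMem_neighbors {c : C} (hQ₀ : SatisfiesCon Adj A Q₀ c)
    (hc : c ∉ neighbors Adj (disagreeSet Q Q₀)) : SatisfiesCon Adj A Q c := by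
  rw [mem_neighbors_iff_card_pos, ← hammingDist_restrict_eq_card, hammingDist_pos,
    not_not] at hc
  rwa [SatisfiesCon, hc]

lemma not_satisfiesCon_of_mem_uniqueNeighbors {c : C}
    (hdist : ∀ f ∈ A c, ∀ g ∈ A c, f ≠ g → 2 ≤ hammingDist f g)
    (hQ₀ : SatisfiesCon Adj A Q₀ c) (hc : c ∈ uniqueNeighbors Adj (disagreeSet Q Q₀)) :
    ¬ SatisfiesCon Adj A Q c := by
  intro hQ
  have hone := (mem_filter.1 hc).2
  rw [← hammingDist_restrict_eq_card] at hone
  have := hdist _ hQ _ hQ₀ (hammingDist_pos.1 (by omega))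
  omega

lemma unsatCount_le_card_neighbors (hQ₀ : ∀ c, SatisfiesCon Adj A Q₀ c) (Q : V → Bool) :
    unsatCount Adj A Q ≤ #(neighbors Adj (disagreeSet Q Q₀)) :=
  card_le_card fun c hc => by_contra fun h =>
    (mem_filter.1 hc).2 (satisfiesCon_of_notMem_neighbors (hQ₀ c) h)

lemma card_uniqueNeighbors_le_unsatCount
    (hdist : ∀ c, ∀ f ∈ A c, ∀ g ∈ A c, f ≠ g → 2 ≤ hammingDist f g)
    (hQ₀ : ∀ c, SatisfiesCon Adj A Q₀ c) (Q : V → Bool) :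
    #(uniqueNeighbors Adj (disagreeSet Q Q₀)) ≤ unsatCount Adj A Q :=
  card_le_card fun c hc =>
    mem_filter.2 ⟨mem_univ c, not_satisfiesCon_of_mem_uniqueNeighbors (hdist c) (hQ₀ c) hc⟩

lemma unsatCount_le_mul_hammingDist {z : ℕ} (hdeg : ∀ v, #(univ.filter (Adj v)) ≤ z)
    (hQ₀ : ∀ c, SatisfiesCon Adj A Q₀ c) (Q : V → Bool) :
    unsatCount Adj A Q ≤ z * hammingDist Q Q₀ :=
  (unsatCount_le_card_neighbors hQ₀ Q).trans <|
    (card_neighbors_le_card_incidentEdges Adj _).trans (card_incidentEdges_le_mul_card Adj hdeg _)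

lemma mul_hammingDist_le_two_mul_unsatCount {z : ℕ} {ε : ℝ} (hε : ε ≤ 1 / 4)
    (hdeg : ∀ v, z ≤ #(univ.filter (Adj v)))
    (hdist : ∀ c, ∀ f ∈ A c, ∀ g ∈ A c, f ≠ g → 2 ≤ hammingDist f g)
    (hQ₀ : ∀ c, SatisfiesCon Adj A Q₀ c)
    (hexp : (1 - ε) * #(incidentEdges Adj (disagreeSet Q Q₀))
      ≤ #(neighbors Adj (disagreeSet Q Q₀))) :
    z * hammingDist Q Q₀ ≤ 2 * unsatCount Adj A Q :=
  calc z * hammingDist Q Q₀ ≤ #(incidentEdges Adj (disagreeSet Q Q₀)) :=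
        mul_card_le_card_incidentEdges Adj hdeg _
    _ ≤ 2 * #(uniqueNeighbors Adj (disagreeSet Q Q₀)) :=
        card_incidentEdges_le_two_mul_card_uniqueNeighbors Adj hε hexp
    _ ≤ 2 * unsatCount Adj A Q :=
        Nat.mul_le_mul_left 2 (card_uniqueNeighbors_le_unsatCount hdist hQ₀ Q)

lemma forall_lt_of_le_add_one_of_forall_ne {d : ℕ → ℕ} {M : ℕ} (h0 : d 0 < M)
    (hstep : ∀ t, d (t + 1) ≤ d t + 1) (hne : ∀ t, d t ≠ M) : ∀ t, d t < M
  | 0 => h0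
  | t + 1 => lt_of_le_of_ne ((hstep t).trans (forall_lt_of_le_add_one_of_forall_ne h0 hstep hne t))
      (hne (t + 1))

theorem monotone_dynamics_stay_close_general
    (Adj : V → C → Prop) (γ ε : ℝ) (hε : ε ≤ 1/4)
    (hγN : ∃ m : ℕ, 0 < m ∧ (m : ℝ) = γ * (Fintype.card V))
    (z_min z_max : ℕ)
    (hdeg : ∀ v : V, z_min ≤ (Finset.univ.filter (fun c : C => Adj v c)).card ∧
      (Finset.univ.filter (fun c : C => Adj v c)).card ≤ z_max)
    (hexp : ∀ S : Finset V, (S.card : ℝ) ≤ γ * (Fintype.card V) →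
      ((Finset.univ.filter (fun c : C => ∃ v ∈ S, Adj v c)).card : ℝ) ≥
        (1 - ε) * ((Finset.univ.filter (fun p : V × C => p.1 ∈ S ∧ Adj p.1 p.2)).card : ℝ))
    (A : ∀ c : C, Set ({v : V // Adj v c} → Bool))
    (hdist : ∀ c : C, ∀ f ∈ A c, ∀ g ∈ A c, f ≠ g →
      2 ≤ (Finset.univ.filter (fun v : {v : V // Adj v c} => f v ≠ g v)).card)
    (Q₀ : V → Bool) (hQ₀ : ∀ c : C, SatisfiesCon Adj A Q₀ c)
    (Q : ℕ → V → Bool)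
    (hstep : ∀ t : ℕ,
      (Finset.univ.filter (fun v : V => Q t v ≠ Q (t+1) v)).card = 1)
    (hmono : ∀ t : ℕ, unsatCount Adj A (Q (t+1)) ≤ unsatCount Adj A (Q t))
    (hinit : ((Finset.univ.filter (fun v : V => Q 0 v ≠ Q₀ v)).card : ℝ) <
      ((z_min : ℝ) / z_max) * (γ * (Fintype.card V) / 2)) :
    ∀ t : ℕ, ((Finset.univ.filter (fun v : V => Q t v ≠ Q₀ v)).card : ℝ) <
      γ * (Fintype.card V) := by
  obtain ⟨m, hm, hmN⟩ := hγN
  obtain ⟨v⟩ : Nonempty V := Fintype.card_pos_iff.1 <| Nat.pos_of_ne_zero fun h => by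
    simp [h] at hmN; omega
  have hz_max : 0 < z_max := Nat.pos_of_ne_zero <| by
    rintro rfl; simp at hinit; exact (Nat.cast_nonneg _).not_gt hinit
  have hinit' : 2 * z_max * hammingDist (Q 0) Q₀ < z_min * m := by
    rw [← hmN, div_mul_eq_mul_div, lt_div_iff₀ (by exact_mod_cast hz_max)] at hinit
    change ((hammingDist (Q 0) Q₀ : ℕ) : ℝ) * z_max < z_min * (m / 2) at hinit
    have : (2 * z_max * hammingDist (Q 0) Q₀ : ℝ) < z_min * m := by linarith
    exact_mod_cast this
  have h0 : hammingDist (Q 0) Q₀ < m := by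
    have : z_max * (2 * hammingDist (Q 0) Q₀) < z_max * m := by
      nlinarith [Nat.mul_le_mul_right m ((hdeg v).1.trans (hdeg v).2)]
    have := Nat.lt_of_mul_lt_mul_left this
    omega
  have hne : ∀ t, hammingDist (Q t) Q₀ ≠ m := by
    intro t ht
    have hfar := mul_hammingDist_le_two_mul_unsatCount hε (fun v => (hdeg v).1) hdist hQ₀
      (hexp _ (by rw [card_disagreeSet, ht, hmN]))
    have hnear := unsatCount_le_mul_hammingDist (fun v => (hdeg v).2) hQ₀ (Q 0)
    have hdecr := antitone_nat_of_succ_le (f := fun t => unsatCount Adj A (Q t)) hmono (Nat.zero_le t)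
    rw [ht] at hfar
    nlinarith
  have hstep' : ∀ t, hammingDist (Q (t + 1)) Q₀ ≤ hammingDist (Q t) Q₀ + 1 := fun t =>
    (hammingDist_triangle _ (Q t) _).trans <| by
      rw [hammingDist_comm, add_comm]; exact Nat.add_le_add_left (hstep t).le _
  intro t
  rw [← hmN]
  exact_mod_cast forall_lt_of_le_add_one_of_forall_ne h0 hstep' hne t

/-- **Monotone single-flip dynamics stay inside the expansion radius.**
Let `G` be a finite bipartite `(γ, 1-ε)` expander with `ε ≤ 1/4`, variable
nodes `V` (`|V| = N`, each variable of degree between `z_min` and `z_max`) and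
constraint nodes `C`, where `γN` is a positive integer, and equip each
constraint node `c` with a set `A c` of satisfying local assignments any two
distinct elements of which differ in at least two coordinates.  Let `Q₀`
satisfy every constraint, and let `Q 0, Q 1, Q 2, …` be states such that
consecutive states differ in exactly one variable node and the number of
unsatisfied constraints is non-increasing.  If `Q 0` differs from `Q₀` on
fewer than `(z_min/z_max) * (γN/2)` variable nodes, then for every `t`,
`Q t` differs from `Q₀` on fewer than `γN` variable nodes. -/
theorem monotone_dynamics_stay_close
    (Adj : V → C → Prop) (γ ε : ℝ) (hγ : 0 < γ) (hε0 : 0 ≤ ε) (hε : ε ≤ 1/4)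
    (hγN : ∃ m : ℕ, 0 < m ∧ (m : ℝ) = γ * (Fintype.card V))
    (z_min z_max : ℕ)
    (hdeg : ∀ v : V, z_min ≤ (Finset.univ.filter (fun c : C => Adj v c)).card ∧
      (Finset.univ.filter (fun c : C => Adj v c)).card ≤ z_max)
    (hexp : ∀ S : Finset V, (S.card : ℝ) ≤ γ * (Fintype.card V) →
      ((Finset.univ.filter (fun c : C => ∃ v ∈ S, Adj v c)).card : ℝ) ≥
        (1 - ε) * ((Finset.univ.filter (fun p : V × C => p.1 ∈ S ∧ Adj p.1 p.2)).card : ℝ))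
    (A : ∀ c : C, Set ({v : V // Adj v c} → Bool))
    (hdist : ∀ c : C, ∀ f ∈ A c, ∀ g ∈ A c, f ≠ g →
      2 ≤ (Finset.univ.filter (fun v : {v : V // Adj v c} => f v ≠ g v)).card)
    (Q₀ : V → Bool) (hQ₀ : ∀ c : C, SatisfiesCon Adj A Q₀ c)
    (Q : ℕ → V → Bool)
    (hstep : ∀ t : ℕ,
      (Finset.univ.filter (fun v : V => Q t v ≠ Q (t+1) v)).card = 1)
    (hmono : ∀ t : ℕ, unsatCount Adj A (Q (t+1)) ≤ unsatCount Adj A (Q t))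
    (hinit : ((Finset.univ.filter (fun v : V => Q 0 v ≠ Q₀ v)).card : ℝ) <
      ((z_min : ℝ) / z_max) * (γ * (Fintype.card V) / 2)) :
    ∀ t : ℕ, ((Finset.univ.filter (fun v : V => Q t v ≠ Q₀ v)).card : ℝ) <
      γ * (Fintype.card V) :=
  monotone_dynamics_stay_close_general Adj γ ε hε hγN z_min z_max hdeg hexp A hdist Q₀ hQ₀ Q hstep
    hmono hinit

end
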